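/- arXiv:0711.2571 — 2 statements merged into one kernel-verified Lean document; each statement's English description precedes it below -/
import Mathlib

section
/- For all integers m ≥ 2 and n ≥ 2, the complete bipartite graph K_{m−1, n−1} contains no Jahangir graph J_{2m} as a subgraph. -/
open SimpleGraph

/-- `G` is contained in `F` as a (not necessarily induced) subgraph, i.e. there is an
injective graph homomorphism from `G` into `F`. -/
def Contains {α : Type*} {β : Type*} (G : SimpleGraph α) (F : SimpleGraph β) : Prop :=
  ∃ f : α → β, Function.Injective f ∧ ∀ ⦃a b : α⦄, G.Adj a b → F.Adj (f a) (f b)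

/-- The Jahangir graph `J_{2m}` on `2m+1` vertices: a cycle on the vertices
`0, 1, …, 2m-1` together with one additional hub vertex (index `2m`) adjacent to the
alternate cycle vertices `0, 2, …, 2m-2`. -/
def jahangir (m : ℕ) : SimpleGraph (Fin (2 * m + 1)) :=
  SimpleGraph.fromRel (fun a b =>
    (a.val < 2 * m ∧ b.val < 2 * m ∧ b.val = (a.val + 1) % (2 * m)) ∨
    (a.val = 2 * m ∧ b.val < 2 * m ∧ b.val % 2 = 0))

/-- The disjoint union of `k` copies of the graph `G`. -/
def kCopies {α : Type*} (k : ℕ) (G : SimpleGraph α) : SimpleGraph (Fin k × α) where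
  Adj a b := a.1 = b.1 ∧ G.Adj a.2 b.2
  symm := ⟨fun _ _ h => ⟨h.1.symm, h.2.symm⟩⟩
  loopless := ⟨fun a h => G.loopless.irrefl a.2 h.2⟩

/-- The disjoint union `K_a ⊔ K_b` of two complete graphs. -/
def twoCliques (a b : ℕ) : SimpleGraph (Fin a ⊕ Fin b) :=
  SimpleGraph.fromRel (fun x y => x.isLeft = y.isLeft)

/-- `ramseyProp G H N` says that every simple graph `F` on `N` vertices contains `G`
as a subgraph, or its complement contains `H` as a subgraph.  The Ramsey number
`R(G, H)` is the least `N` with this property. -/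
def ramseyProp {α : Type*} {β : Type*} (G : SimpleGraph α) (H : SimpleGraph β) (N : ℕ) : Prop :=
  ∀ F : SimpleGraph (Fin N), Contains G F ∨ Contains H Fᶜ

/-!
In a proper 2-colouring of `J_{2m}` the `m` even rim vertices all get the colour opposite to
the hub, hence the `m` odd rim vertices all get the hub's colour; so each colour class has at
least `m` vertices. An injective homomorphism into `K_{m-1,n-1}` pulls back the side
2-colouring, and would inject the colour class of the left side into `m - 1` vertices.
-/

open Finset

theorem card_filter_isLeft_le {α V W : Type*} [Fintype α] [Fintype V] {f : α → V ⊕ W}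
    (hf : Function.Injective f) : #{a | (f a).isLeft} ≤ Fintype.card V := by
  rw [← Fintype.card_subtype]
  refine Fintype.card_le_of_injective (fun a => (f a.1).getLeft a.2) fun a b hab => ?_
  refine Subtype.ext (hf ?_)
  rw [(Sum.getLeft_eq_iff _).1 hab, Sum.inl_getLeft]

def jahangirEven (m : ℕ) (i : Fin m) : Fin (2 * m + 1) := ⟨2 * i, by omega⟩

def jahangirOdd (m : ℕ) (i : Fin m) : Fin (2 * m + 1) := ⟨2 * i + 1, by omega⟩

theorem jahangirEven_injective (m : ℕ) : Function.Injective (jahangirEven m) := by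
  intro i j h
  simp only [jahangirEven, Fin.mk.injEq] at h
  exact Fin.ext (by omega)

theorem jahangirOdd_injective (m : ℕ) : Function.Injective (jahangirOdd m) := by
  intro i j h
  simp only [jahangirOdd, Fin.mk.injEq] at h
  exact Fin.ext (by omega)

theorem jahangir_adj_last_even {m : ℕ} (i : Fin m) :
    (jahangir m).Adj (Fin.last (2 * m)) (jahangirEven m i) := by
  simp only [jahangir, fromRel_adj, jahangirEven, ne_eq, Fin.ext_iff, Fin.val_last]
  refine ⟨by omega, Or.inl (Or.inr ⟨trivial, by omega, by omega⟩)⟩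

theorem jahangir_adj_even_odd {m : ℕ} (i : Fin m) :
    (jahangir m).Adj (jahangirEven m i) (jahangirOdd m i) := by
  simp only [jahangir, fromRel_adj, jahangirEven, jahangirOdd, ne_eq, Fin.ext_iff]
  refine ⟨by omega, Or.inl (Or.inl ⟨by omega, by omega, ?_⟩)⟩
  rw [Nat.mod_eq_of_lt (by omega)]

theorem jahangir_le_card_colorClass {m : ℕ} (C : (jahangir m).Coloring Bool) (c : Bool) :
    m ≤ #{v | C v = c} := by
  have heven (i : Fin m) : C (jahangirEven m i) = !C (Fin.last _) :=
    Bool.eq_not_iff.2 (C.valid (jahangir_adj_last_even i)).symm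
  have hodd (i : Fin m) : C (jahangirOdd m i) = C (Fin.last _) := by
    simpa [heven, eq_comm] using C.valid (jahangir_adj_even_odd i)
  obtain ⟨g, hg, hgc⟩ :
      ∃ g : Fin m → Fin (2 * m + 1), Function.Injective g ∧ ∀ i, C (g i) = c := by
    by_cases hc : C (Fin.last _) = c
    · exact ⟨_, jahangirOdd_injective m, fun i => (hodd i).trans hc⟩
    · exact ⟨_, jahangirEven_injective m,
        fun i => (heven i).trans (Bool.eq_not_iff.2 (Ne.symm hc)).symm⟩
  simpa using card_le_card_of_injOn g (s := univ) (by simp [hgc]) hg.injOn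

theorem jahangir_not_in_completeBipartite_general (m n : ℕ) (hm : 2 ≤ m) :
    ¬ Contains (jahangir m) (completeBipartiteGraph (Fin (m - 1)) (Fin (n - 1))) := by
  rintro ⟨f, hf, hadj⟩
  let φ : jahangir m →g completeBipartiteGraph (Fin (m - 1)) (Fin (n - 1)) := ⟨f, @hadj⟩
  have hm_le : m ≤ #{v | (f v).isRight = false} :=
    jahangir_le_card_colorClass ((CompleteBipartiteGraph.bicoloring _ _).comp φ) false
  simp only [Sum.isRight_eq_false] at hm_le
  have hle_m := card_filter_isLeft_le hf
  rw [Fintype.card_fin] at hle_m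
  omega

/-- For `m ≥ 2` and `n ≥ 2`, the complete bipartite graph `K_{m-1,n-1}` contains no
Jahangir graph `J_{2m}`. -/
theorem jahangir_not_in_completeBipartite (m n : ℕ) (hm : 2 ≤ m) (hn : 2 ≤ n) :
    ¬ Contains (jahangir m) (completeBipartiteGraph (Fin (m - 1)) (Fin (n - 1))) :=
  jahangir_not_in_completeBipartite_general m n hm
end

section
/- For all integers n ≥ 4 and k ≥ 1 with (n,k) ≠ (4,1), the Ramsey number R(kP_n, J_4) equals kn + 1. -/
open SimpleGraph

variable {α β V : Type*}

theorem contains_iff_isContained {G : SimpleGraph α} {F : SimpleGraph β} :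
    Contains G F ↔ G ⊑ F :=
  ⟨fun ⟨f, hf, hadj⟩ => ⟨⟨⟨f, fun h => hadj h⟩, hf⟩⟩,
    fun ⟨c⟩ => ⟨c, c.injective, fun _ _ h => c.toHom.map_adj h⟩⟩

theorem ramseyProp.isContained_or_isContained_compl {G : SimpleGraph α} {H : SimpleGraph β}
    {N : ℕ} (h : ramseyProp G H N) (f : Fin N ↪ V) (F : SimpleGraph V) : G ⊑ F ∨ H ⊑ Fᶜ := by
  have hind : F.comap f ⊴ F := isIndContained_iff_exists_comap_eq.2 ⟨f, rfl⟩
  have hcompl : (F.comap f)ᶜ ⊑ Fᶜ := (compl_isIndContained_compl.2 hind).isContained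
  simp only [ramseyProp, contains_iff_isContained] at h
  exact (h (F.comap f)).imp (·.trans hind.isContained) (·.trans hcompl)

theorem exists_adj_of_not_isContained_compl [Fintype α] [Fintype V] {H : SimpleGraph α}
    {F : SimpleGraph V} (hcard : Fintype.card α ≤ Fintype.card V) (h : ¬H ⊑ Fᶜ) :
    ∃ x y, F.Adj x y := by
  by_contra! hF
  have hFc : Fᶜ = ⊤ := by ext x y; simp [hF]
  exact h (hFc ▸ isContained_top_iff.2 (Function.Embedding.nonempty_of_card_le hcard))

theorem not_isContained_of_isolated [Finite β] {A : SimpleGraph α} {B : SimpleGraph β}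
    (hcard : Nat.card β ≤ Nat.card α) (hA : ∀ a, ∃ a', A.Adj a a') {b : β}
    (hb : ∀ b', ¬B.Adj b b') : ¬A ⊑ B := by
  rintro ⟨f⟩
  obtain ⟨a, rfl⟩ := (f.injective.bijective_of_nat_card_le hcard).2 b
  obtain ⟨a', ha'⟩ := hA a
  exact hb _ (f.toHom.map_adj ha')

theorem jahangir_two_isContained {G : SimpleGraph V} {u v a b c : V} (huv : u ≠ v)
    (hab : a ≠ b) (hac : a ≠ c) (hbc : b ≠ c) (hua : G.Adj u a) (hub : G.Adj u b)
    (huc : G.Adj u c) (hva : G.Adj v a) (hvb : G.Adj v b) (hvc : G.Adj v c) :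
    jahangir 2 ⊑ G := by
  refine ⟨⟨⟨![u, a, v, b, c], fun {x y} h => ?_⟩, ?_⟩⟩
  · revert x y
    simp [Fin.forall_fin_succ, jahangir, adj_comm, *]
  · simp_all [Function.Injective, Fin.forall_fin_succ, eq_comm, hua.ne, hub.ne, huc.ne, hva.ne,
      hvb.ne, hvc.ne]

theorem jahangir_two_not_isContained {B : SimpleGraph β} {c : β}
    (hc : ∀ x y, B.Adj x y → x = c ∨ y = c) : ¬jahangir 2 ⊑ B := by
  rintro ⟨f⟩
  have h01 : (jahangir 2).Adj 0 1 := by simp [jahangir]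
  have h23 : (jahangir 2).Adj 2 3 := by simp [jahangir]
  rcases hc _ _ (f.toHom.map_adj h01) with hx | hx <;>
    rcases hc _ _ (f.toHom.map_adj h23) with hy | hy <;>
    exact absurd (f.injective (hx.trans hy.symm)) (by decide)

theorem pathGraph_isContained_of_le {m n : ℕ} (h : m ≤ n) : pathGraph m ⊑ pathGraph n :=
  ⟨⟨⟨Fin.castLE h, fun {i j} hij => by simpa [pathGraph_adj] using hij⟩, Fin.castLE_injective h⟩⟩

theorem pathGraph_exists_adj {n : ℕ} (hn : 2 ≤ n) (i : Fin n) : ∃ j, (pathGraph n).Adj i j := by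
  by_cases hi : i.val + 1 < n
  · exact ⟨⟨i + 1, hi⟩, by simp [pathGraph_adj]⟩
  · exact ⟨⟨i - 1, by omega⟩, by simp [pathGraph_adj]; omega⟩

theorem kCopies_pathGraph_isContained (k n : ℕ) :
    kCopies k (pathGraph n) ⊑ pathGraph (k * n) :=
  ⟨⟨⟨finProdFinEquiv, fun {x y} ⟨hxy, hadj⟩ => by
    simp [pathGraph_adj, finProdFinEquiv, hxy] at hadj ⊢; omega⟩, finProdFinEquiv.injective⟩⟩

theorem kCopies_pathGraph_not_isContained_twoCliques {k n : ℕ} (hn : 2 ≤ n) (hk : 1 ≤ k) :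
    ¬kCopies k (pathGraph n) ⊑ twoCliques (k * n - 1) 1 := by
  refine not_isContained_of_isolated (by simp; omega)
    (fun x => let ⟨j, hj⟩ := pathGraph_exists_adj hn x.2; ⟨(x.1, j), rfl, hj⟩) (b := .inr 0) ?_
  rintro (x | x) <;> simp [twoCliques, Fin.fin_one_eq_zero]

theorem jahangir_two_not_isContained_compl_twoCliques (a : ℕ) :
    ¬jahangir 2 ⊑ (twoCliques a 1)ᶜ := by
  refine jahangir_two_not_isContained (c := .inr 0) ?_
  rintro (x | x) (y | y) <;> simp [twoCliques, Fin.fin_one_eq_zero]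

namespace SimpleGraph

variable {F : SimpleGraph V} {l : List V}

def IsVertexPath (F : SimpleGraph V) (l : List V) : Prop := l.Nodup ∧ l.IsChain F.Adj

@[simp] theorem isVertexPath_singleton {a : V} : F.IsVertexPath [a] := by simp [IsVertexPath]

@[simp] theorem isVertexPath_cons_cons {a b : V} :
    F.IsVertexPath (a :: b :: l) ↔ a ∉ b :: l ∧ F.Adj a b ∧ F.IsVertexPath (b :: l) := by
  simp only [IsVertexPath, List.nodup_cons (a := a), List.isChain_cons_cons]
  tauto

theorem IsVertexPath.reverse (h : F.IsVertexPath l) : F.IsVertexPath l.reverse :=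
  ⟨List.nodup_reverse.2 h.1, List.isChain_reverse.2 (h.2.imp fun _ _ h => h.symm)⟩

theorem IsVertexPath.isContained (h : F.IsVertexPath l) : pathGraph l.length ⊑ F := by
  refine ⟨⟨⟨fun i => l[i], fun {i j} hij => ?_⟩, fun i j hij => ?_⟩⟩
  · rw [pathGraph_adj] at hij
    rcases hij with hij | hij
    · simpa [← hij] using h.2.getElem i (by omega)
    · simpa [← hij] using (h.2.getElem j (by omega)).symm
  · exact List.nodup_iff_injective_getElem.1 h.1 hij

theorem exists_longest_isVertexPath [Finite V] {x y : V} (hxy : F.Adj x y) :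
    ∃ a mid z, F.IsVertexPath (a :: (mid ++ [z])) ∧
      ∀ l', F.IsVertexPath l' → l'.length ≤ (a :: (mid ++ [z])).length := by
  classical
  have := Fintype.ofFinite V
  let P (L : ℕ) := ∃ l, F.IsVertexPath l ∧ l.length = L
  obtain ⟨l, hl, hlen⟩ : P (Nat.findGreatest P (Fintype.card V)) :=
    Nat.findGreatest_spec (P := P) (Nat.zero_le _) ⟨[], by simp [IsVertexPath], rfl⟩
  have hmax : ∀ l', F.IsVertexPath l' → l'.length ≤ l.length := fun l' hl' =>
    hlen ▸ Nat.le_findGreatest hl'.1.length_le_card ⟨l', hl', rfl⟩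
  have h2 : 2 ≤ l.length := hmax [x, y] (by simp [hxy, hxy.ne])
  rcases l with _ | ⟨a, t⟩
  · simp at h2
  · obtain ⟨mid, z, rfl⟩ := t.eq_nil_or_concat.resolve_left (by rintro rfl; simp at h2)
    exact ⟨a, mid, z, by simpa using hl, by simpa using hmax⟩

theorem IsVertexPath.compl_adj_of_forall_length_le {a u : V} (hl : F.IsVertexPath (a :: l))
    (hmax : ∀ l', F.IsVertexPath l' → l'.length ≤ (a :: l).length) (hu : u ∉ a :: l) :
    Fᶜ.Adj a u :=
  ⟨fun h => hu (h ▸ List.mem_cons_self), fun hau => by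
    simpa using hmax (u :: a :: l) (isVertexPath_cons_cons.2 ⟨hu, hau.symm, hl⟩)⟩

theorem IsVertexPath.compl_adj_ends {a z u : V} {mid : List V}
    (hl : F.IsVertexPath (a :: (mid ++ [z])))
    (hmax : ∀ l', F.IsVertexPath l' → l'.length ≤ (a :: (mid ++ [z])).length)
    (hu : u ∉ a :: (mid ++ [z])) : Fᶜ.Adj a u ∧ Fᶜ.Adj z u :=
  ⟨hl.compl_adj_of_forall_length_le hmax hu,
    compl_adj_of_forall_length_le (l := mid.reverse ++ [a]) (by simpa using hl.reverse)
      (fun l' hl' => by simpa using hmax l' hl') (by simp at hu ⊢; tauto)⟩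

theorem IsVertexPath.false_of_longest_of_cover {a b c z u v : V} {mid : List V}
    (hl : F.IsVertexPath (a :: b :: c :: (mid ++ [z])))
    (hmax : ∀ l', F.IsVertexPath l' → l'.length ≤ (a :: b :: c :: (mid ++ [z])).length)
    (hu : u ∉ a :: b :: c :: (mid ++ [z])) (hv : v ∉ a :: b :: c :: (mid ++ [z])) (huv : u ≠ v)
    (hav : Fᶜ.Adj a v) (hzu : Fᶜ.Adj z u)
    (hcover : ∀ x ∈ b :: c :: mid, F.Adj u x ∨ F.Adj v x) (hub : F.Adj u b)
    (hJ : ¬jahangir 2 ⊑ Fᶜ) : False := by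
  have longer : ∀ l', F.IsVertexPath l' → mid.length + 4 < l'.length → False :=
    fun l' hl' hlen => by have := hmax l' hl'; simp at this; omega
  simp only [isVertexPath_cons_cons, List.mem_cons, List.mem_append, not_or] at hl hu hv
  have huc : ¬F.Adj u c := fun huc =>
    longer (a :: b :: u :: c :: (mid ++ [z])) (by simp_all [adj_comm, eq_comm]) (by simp)
  have hvc : F.Adj v c := (hcover c (by simp)).resolve_left huc
  have huv' : ¬F.Adj u v := fun huv' =>
    longer (a :: b :: u :: v :: c :: (mid ++ [z])) (by simp_all [adj_comm, eq_comm]) (by simp)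
  rcases mid with _ | ⟨d, rest⟩
  · have hac : ¬F.Adj a c := fun hac =>
      longer [u, b, a, c, z] (by simp_all [adj_comm, eq_comm]) (by simp)
    have haz : ¬F.Adj a z := fun haz =>
      longer [u, b, a, z, c] (by simp_all [adj_comm, eq_comm]) (by simp)
    exact hJ (jahangir_two_isContained (G := Fᶜ) (u := u) (v := a) (a := c) (b := z) (c := v)
      (by tauto) (by simp_all) (by tauto) (by tauto) ⟨by tauto, huc⟩ hzu.symm ⟨huv, huv'⟩
      ⟨by tauto, hac⟩ ⟨by tauto, haz⟩ hav)
  · have hvd : ¬F.Adj v d := fun hvd =>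
      longer (a :: b :: c :: v :: d :: (rest ++ [z])) (by simp_all [adj_comm, eq_comm]) (by simp)
    have hud : F.Adj u d := (hcover d (by simp)).resolve_right hvd
    exact longer (v :: c :: b :: u :: d :: (rest ++ [z])) (by simp_all [adj_comm, eq_comm])
      (by simp)

theorem exists_isVertexPath_card_sub_one_le [Fintype V] (hV : 6 ≤ Fintype.card V)
    (hJ : ¬jahangir 2 ⊑ Fᶜ) : ∃ l, F.IsVertexPath l ∧ Fintype.card V - 1 ≤ l.length := by
  classical
  obtain ⟨x, y, hxy⟩ := exists_adj_of_not_isContained_compl (by simp; omega) hJ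
  obtain ⟨a, mid, z, hl, hmax⟩ := exists_longest_isVertexPath hxy
  have hnodup := hl.1
  simp only [List.nodup_cons, List.mem_append, List.mem_cons, List.not_mem_nil, or_false,
    not_or, List.nodup_append, List.nodup_nil, ne_eq, forall_eq, not_false_eq_true, and_self,
    true_and] at hnodup
  set S := (a :: (mid ++ [z])).toFinsetᶜ
  have hout : ∀ {u}, u ∈ S → u ∉ a :: (mid ++ [z]) := fun hu =>
    List.mem_toFinset.not.1 (Finset.mem_compl.1 hu)
  have hS : S.card = Fintype.card V - (mid.length + 2) := by
    rw [Finset.card_compl, List.toFinset_card_of_nodup hl.1]; simp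
  have hS2 : S.card ≤ 2 := by
    by_contra! h3
    obtain ⟨u, hu, v, hv, w, hw, huv, huw, hvw⟩ := Finset.two_lt_card.1 h3
    obtain ⟨hau, hzu⟩ := hl.compl_adj_ends hmax (hout hu)
    obtain ⟨hav, hzv⟩ := hl.compl_adj_ends hmax (hout hv)
    obtain ⟨haw, hzw⟩ := hl.compl_adj_ends hmax (hout hw)
    exact hJ (jahangir_two_isContained hnodup.1.2 huv huw hvw hau hav haw hzu hzv hzw)
  by_cases hS1 : S.card ≤ 1
  · exact ⟨_, hl, by simp; omega⟩
  exfalso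
  obtain ⟨u, hu, v, hv, huv⟩ := Finset.one_lt_card.1 (by omega : 1 < S.card)
  replace hu := hout hu
  replace hv := hout hv
  have hcover : ∀ x ∈ mid, F.Adj u x ∨ F.Adj v x := by
    by_contra! ⟨x, hx, hux, hvx⟩
    have hx' : x ∈ a :: (mid ++ [z]) := by simp [hx]
    exact hJ (jahangir_two_isContained (G := Fᶜ) huv (fun h : a = x => hnodup.1.1 (h ▸ hx))
      hnodup.1.2 (hnodup.2.2 x hx) (hl.compl_adj_ends hmax hu).1.symm
      ⟨(ne_of_mem_of_not_mem hx' hu).symm, hux⟩ (hl.compl_adj_ends hmax hu).2.symm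
      (hl.compl_adj_ends hmax hv).1.symm ⟨(ne_of_mem_of_not_mem hx' hv).symm, hvx⟩
      (hl.compl_adj_ends hmax hv).2.symm)
  obtain ⟨b, c, mid, rfl⟩ : ∃ b c mid', mid = b :: c :: mid' := by
    rcases mid with _ | ⟨b, _ | ⟨c, mid⟩⟩
    · simp at hS; omega
    · simp at hS; omega
    · exact ⟨b, c, mid, rfl⟩
  rcases hcover b (by simp) with hub | hvb
  · exact hl.false_of_longest_of_cover hmax hu hv huv (hl.compl_adj_ends hmax hv).1
      (hl.compl_adj_ends hmax hu).2 hcover hub hJ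
  · exact hl.false_of_longest_of_cover hmax hv hu huv.symm (hl.compl_adj_ends hmax hu).1
      (hl.compl_adj_ends hmax hv).2 (fun x hx => (hcover x hx).symm) hvb hJ

end SimpleGraph

/-- For `n ≥ 4`, `k ≥ 1` with `(n,k) ≠ (4,1)`, the Ramsey number `R(kP_n, J_4)`
equals `kn + 1`. -/
theorem ramsey_kPath_J4 (n k : ℕ) (hn : 4 ≤ n) (hk : 1 ≤ k) (h : ¬ (n = 4 ∧ k = 1)) :
    IsLeast {N | ramseyProp (kCopies k (pathGraph n)) (jahangir 2) N} (k * n + 1) := by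
  have hkn : 5 ≤ k * n := by
    rcases Nat.lt_or_ge k 2 with hk2 | hk2
    · obtain rfl : k = 1 := by omega
      omega
    · nlinarith
  refine ⟨fun F => ?_, fun N hN => ?_⟩
  · simp only [contains_iff_isContained]
    refine or_iff_not_imp_right.2 fun hJ => ?_
    obtain ⟨l, hl, hlen⟩ := exists_isVertexPath_card_sub_one_le (by simp; omega) hJ
    exact (kCopies_pathGraph_isContained k n).trans
      ((pathGraph_isContained_of_le (by simpa using hlen)).trans hl.isContained)
  · by_contra! hN'
    obtain ⟨f⟩ : Nonempty (Fin N ↪ Fin (k * n - 1) ⊕ Fin 1) :=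
      Function.Embedding.nonempty_of_card_le (by simp; omega)
    rcases hN.isContained_or_isContained_compl f (twoCliques (k * n - 1) 1) with hP | hJ
    · exact kCopies_pathGraph_not_isContained_twoCliques (by omega) hk hP
    · exact jahangir_two_not_isContained_compl_twoCliques _ hJ
end
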